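/- arXiv:2411.02015 — 2 statements merged into one kernel-verified Lean document; each statement's English description precedes it below -/
import Mathlib

section
/- Let H be a real Hilbert space and N a closed linear subspace of H. Let E : H → H be a bounded linear idempotent self-adjoint 'expectation' operator whose range is contained in N (i.e., E = E∘E, E is self-adjoint, and E(x) ∈ N for all x). For r > 0, α ≥ 0, and z ∈ H, the proximal operator of the function ψ(x) = (α/2)‖x − E(x)‖² + i_N(x) (indicator of N) with parameter 1/r is given explicitly by prox_{ψ/r}(z) = (α·E(z) + r·Proj_N(z)) / (r + α), where Proj_N is the orthogonal projection onto N. -/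
open RealInnerProductSpace

/-!
On `N` the objective `f x = (α/2)‖x - E x‖² + (r/2)‖x - z‖²` is a quadratic whose Hessian is at
least `r`, so it suffices to find a point `p ∈ N` at which its gradient
`α (p - E p) + r (p - z)` is orthogonal to `N`; then `f (p + h) ≥ f p + (r/2)‖h‖²` for `h ∈ N`.
Since `E` is a symmetric idempotent with range in `N`, `E` does not see the difference between `z`
and its projection `P` onto `N`, and for `p = (α E z + r P)/(r + α)` one gets `E p = E z` and the
gradient `r (P - z) ∈ Nᗮ`.
-/

theorem isMinOn_and_eq_of_add_sq_le {X : Type*} [MetricSpace X] {f : X → ℝ} {s : Set X}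
    {p : X} {c : ℝ} (hc : 0 < c) (hp : p ∈ s) (hf : ∀ x ∈ s, f p + c * dist x p ^ 2 ≤ f x) :
    IsMinOn f s p ∧ ∀ q ∈ s, IsMinOn f s q → q = p := by
  refine ⟨fun x hx => ?_, fun q hq hmin => ?_⟩
  · have hgap : 0 ≤ c * dist x p ^ 2 := by positivity
    exact (le_add_of_nonneg_right hgap).trans (hf x hx)
  · have hle : f q ≤ f p := hmin hp
    have : c * dist q p ^ 2 ≤ 0 := by linarith [hf q hq]
    have : dist q p ^ 2 ≤ 0 := nonpos_of_mul_nonpos_right this hc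
    exact dist_le_zero.mp (by nlinarith)

namespace LinearMap.IsSymmetric

variable {H : Type*} [NormedAddCommGroup H] [InnerProductSpace ℝ H] {E : H →ₗ[ℝ] H}

theorem inner_sub_apply_apply_eq_zero (hE : E.IsSymmetric) (hidem : ∀ x, E (E x) = E x)
    (x y : H) : ⟪x - E x, E y⟫ = 0 := by
  rw [← hE, map_sub, hidem, sub_self, inner_zero_left]

theorem apply_starProjection (hE : E.IsSymmetric) {N : Submodule ℝ H}
    [N.HasOrthogonalProjection] (hrange : ∀ x, E x ∈ N) (z : H) :
    E (N.starProjection z) = E z :=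
  ext_inner_right ℝ fun y => by
    rw [hE, hE, N.inner_starProjection_left_eq_right, N.starProjection_eq_self_iff.mpr (hrange y)]

theorem objective_add_eq (hE : E.IsSymmetric) (hidem : ∀ x, E (E x) = E x) (α r : ℝ) (z p h : H) :
    (α / 2) * ‖(p + h) - E (p + h)‖ ^ 2 + (r / 2) * ‖(p + h) - z‖ ^ 2 =
      (α / 2) * ‖p - E p‖ ^ 2 + (r / 2) * ‖p - z‖ ^ 2 + ⟪α • (p - E p) + r • (p - z), h⟫ +
        ((α / 2) * ‖h - E h‖ ^ 2 + (r / 2) * ‖h‖ ^ 2) := by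
  have hcross : ⟪p - E p, h - E h⟫ = ⟪p - E p, h⟫ := by
    rw [inner_sub_right, hE.inner_sub_apply_apply_eq_zero hidem, sub_zero]
  rw [map_add, show p + h - (E p + E h) = (p - E p) + (h - E h) by abel,
    show p + h - z = (p - z) + h by abel, norm_add_sq_real, norm_add_sq_real, hcross,
    inner_add_left, real_inner_smul_left, real_inner_smul_left]
  ring

end LinearMap.IsSymmetric

theorem LinearMap.smul_sub_apply_add_smul_sub {H : Type*} [AddCommGroup H] [Module ℝ H]
    {E : H →ₗ[ℝ] H} (hidem : ∀ x, E (E x) = E x) {r α : ℝ} (hrα : r + α ≠ 0) {z P p : H}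
    (hP : E P = E z) (hp : (r + α) • p = α • E z + r • P) :
    α • (p - E p) + r • (p - z) = r • (P - z) := by
  have hEp : E p = E z := by
    have h : (r + α) • E p = (r + α) • E z := by
      rw [← map_smul, hp, map_add, map_smul, map_smul, hidem, hP, ← add_smul, add_comm α]
    exact smul_right_injective H hrα h
  rw [hEp]
  linear_combination (norm := module) hp

theorem vppha_prox_formula_general
    {H : Type*} [NormedAddCommGroup H] [InnerProductSpace ℝ H]
    (N : Submodule ℝ H) [CompleteSpace N]
    (E : H →L[ℝ] H)
    (hE_idem : ∀ x, E (E x) = E x)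
    (hE_sa : ∀ x y, ⟪E x, y⟫ = ⟪x, E y⟫)
    (hE_range : ∀ x, E x ∈ N)
    (r α : ℝ) (hr : 0 < r) (hα : 0 ≤ α) (z : H) :
    ((r + α)⁻¹ • (α • E z + r • (N.orthogonalProjectionOnto z : H)) ∈ N) ∧
    IsMinOn (fun x : H => (α / 2) * ‖x - E x‖ ^ 2 + (r / 2) * ‖x - z‖ ^ 2)
      (N : Set H) ((r + α)⁻¹ • (α • E z + r • (N.orthogonalProjectionOnto z : H))) ∧
    (∀ q ∈ N,
      IsMinOn (fun x : H => (α / 2) * ‖x - E x‖ ^ 2 + (r / 2) * ‖x - z‖ ^ 2)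
        (N : Set H) q →
      q = (r + α)⁻¹ • (α • E z + r • (N.orthogonalProjectionOnto z : H))) := by
  have hE : (E : H →ₗ[ℝ] H).IsSymmetric := hE_sa
  rw [Submodule.coe_orthogonalProjectionOnto_apply]
  set P := N.starProjection z
  set p := (r + α)⁻¹ • (α • E z + r • P)
  have hp_mem : p ∈ N :=
    N.smul_mem _ <|
      N.add_mem (N.smul_mem _ (hE_range z)) (N.smul_mem _ (N.starProjection_apply_mem z))
  have hgrad : α • (p - E p) + r • (p - z) = r • (P - z) :=
    LinearMap.smul_sub_apply_add_smul_sub (E := (E : H →ₗ[ℝ] H)) hE_idem (by positivity)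
      (hE.apply_starProjection hE_range z) (smul_inv_smul₀ (by positivity) _)
  have hgrowth : ∀ x ∈ N, (α / 2) * ‖p - E p‖ ^ 2 + (r / 2) * ‖p - z‖ ^ 2 + r / 2 * dist x p ^ 2 ≤
      (α / 2) * ‖x - E x‖ ^ 2 + (r / 2) * ‖x - z‖ ^ 2 := by
    intro x hx
    have horth : ⟪P - z, x - p⟫ = 0 := by
      rw [← neg_sub, inner_neg_left, N.starProjection_inner_eq_zero _ _ (N.sub_mem hx hp_mem),
        neg_zero]
    have hexp := hE.objective_add_eq hE_idem α r z p (x - p)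
    simp only [ContinuousLinearMap.coe_coe, add_sub_cancel] at hexp
    rw [hexp, hgrad, real_inner_smul_left, horth, dist_eq_norm]
    have : 0 ≤ (α / 2) * ‖x - p - E (x - p)‖ ^ 2 := by positivity
    linarith
  exact ⟨hp_mem, isMinOn_and_eq_of_add_sq_le (half_pos hr) hp_mem hgrowth⟩

/-- explicit formula for the proximal operator of
`ψ(x) = (α/2)‖x − E x‖² + i_N(x)` with parameter `1/r`:
`prox_{ψ/r}(z) = (α·E z + r·Proj_N z)/(r+α)`, i.e. this point lies in `N`,
minimizes `x ↦ (α/2)‖x − E x‖² + (r/2)‖x − z‖²` over `N`, and is the unique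
such minimizer. -/
theorem vppha_prox_formula
    {H : Type*} [NormedAddCommGroup H] [InnerProductSpace ℝ H] [CompleteSpace H]
    (N : Submodule ℝ H) [CompleteSpace N]
    (E : H →L[ℝ] H)
    (hE_idem : ∀ x, E (E x) = E x)
    (hE_sa : ∀ x y, ⟪E x, y⟫ = ⟪x, E y⟫)
    (hE_range : ∀ x, E x ∈ N)
    (r α : ℝ) (hr : 0 < r) (hα : 0 ≤ α) (z : H) :
    ((r + α)⁻¹ • (α • E z + r • (N.orthogonalProjectionOnto z : H)) ∈ N) ∧
    IsMinOn (fun x : H => (α / 2) * ‖x - E x‖ ^ 2 + (r / 2) * ‖x - z‖ ^ 2)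
      (N : Set H) ((r + α)⁻¹ • (α • E z + r • (N.orthogonalProjectionOnto z : H))) ∧
    (∀ q ∈ N,
      IsMinOn (fun x : H => (α / 2) * ‖x - E x‖ ^ 2 + (r / 2) * ‖x - z‖ ^ 2)
        (N : Set H) q →
      q = (r + α)⁻¹ • (α • E z + r • (N.orthogonalProjectionOnto z : H))) :=
  vppha_prox_formula_general N E hE_idem hE_sa hE_range r α hr hα z
end

section
/- Let H be a real Hilbert space, N a closed linear subspace, and E self-adjoint idempotent with range(E) ⊆ N and E(y) = 0 for all y ∈ N⊥. For any z ∈ H, r > 0, α ≥ 0, the unique minimizer x̄ of x ↦ (α/2)‖x − E(x)‖² + (r/2)‖x − z‖² over N satisfies E(x̄) = E(z). -/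
/-!
Moving a point of `N` along a fixed vector `v = E v ∈ N` leaves the variance term `x - E x`
unchanged, so at the minimizer `x̄` the proximal term `‖x - z‖²` must be stationary in every such
direction: `x̄ - z ⊥ range E`. Self-adjointness of `E` then gives `E (x̄ - z) = 0`.
-/

open RealInnerProductSpace

section
variable {F : Type*} [NormedAddCommGroup F] [InnerProductSpace ℝ F]

theorem real_inner_eq_zero_of_forall_norm_le_norm_add_smul {u v : F}
    (h : ∀ t : ℝ, ‖u‖ ≤ ‖u + t • v‖) : ⟪u, v⟫ = 0 := by
  have hquad : ∀ t : ℝ, 0 ≤ ‖v‖ ^ 2 * (t * t) + 2 * ⟪u, v⟫ * t + 0 := fun t => by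
    have := pow_le_pow_left₀ (norm_nonneg u) (h t) 2
    rw [norm_add_sq_real, real_inner_smul_right, norm_smul, Real.norm_eq_abs, mul_pow, sq_abs]
      at this
    linarith
  have hdiscrim := discrim_le_zero hquad
  rw [discrim] at hdiscrim
  nlinarith [sq_nonneg ⟪u, v⟫]

theorem LinearMap.IsSymmetric.eq_zero_of_forall_inner_apply_eq_zero {T : F →ₗ[ℝ] F}
    (hT : T.IsSymmetric) {x : F} (h : ∀ w, ⟪x, T w⟫ = 0) : T x = 0 := by
  rw [← inner_self_eq_zero (𝕜 := ℝ), hT, h]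

theorem inner_sub_eq_zero_of_isMinOn {N : Submodule ℝ F} {E : F →L[ℝ] F} {r α : ℝ} {z xbar : F}
    (hr : 0 < r) (hx_mem : xbar ∈ N)
    (hx_min : IsMinOn (fun x : F => (α / 2) * ‖x - E x‖ ^ 2 + (r / 2) * ‖x - z‖ ^ 2)
      (N : Set F) xbar)
    {v : F} (hvN : v ∈ N) (hEv : E v = v) : ⟪xbar - z, v⟫ = 0 := by
  refine real_inner_eq_zero_of_forall_norm_le_norm_add_smul fun t => ?_
  have hmin := isMinOn_iff.mp hx_min _ (N.add_mem hx_mem (N.smul_mem t hvN))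
  have hvariance : xbar + t • v - E (xbar + t • v) = xbar - E xbar := by
    rw [map_add, map_smul, hEv]; abel
  rw [hvariance, add_sub_right_comm] at hmin
  have hsq : ‖xbar - z‖ ^ 2 ≤ ‖xbar - z + t • v‖ ^ 2 := by nlinarith
  exact (pow_le_pow_iff_left₀ (norm_nonneg _) (norm_nonneg _) two_ne_zero).mp hsq

end

theorem vppha_minimizer_mean_general
    {H : Type*} [NormedAddCommGroup H] [InnerProductSpace ℝ H]
    (N : Submodule ℝ H)
    (E : H →L[ℝ] H)
    (hE_idem : ∀ x, E (E x) = E x)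
    (hE_sa : ∀ x y, ⟪E x, y⟫ = ⟪x, E y⟫)
    (hE_range : ∀ x, E x ∈ N)
    (r α : ℝ) (hr : 0 < r) (z : H)
    (xbar : H) (hx_mem : xbar ∈ N)
    (hx_min : IsMinOn (fun x : H => (α / 2) * ‖x - E x‖ ^ 2 + (r / 2) * ‖x - z‖ ^ 2)
      (N : Set H) xbar) :
    E xbar = E z := by
  have hsymm : (E : H →ₗ[ℝ] H).IsSymmetric := hE_sa
  have horth : ∀ w, ⟪xbar - z, E w⟫ = 0 := fun w =>
    inner_sub_eq_zero_of_isMinOn hr hx_mem hx_min (hE_range w) (hE_idem w)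
  rw [← sub_eq_zero, ← map_sub]
  exact hsymm.eq_zero_of_forall_inner_apply_eq_zero horth

/-- the unique minimizer `x̄` over `N` of
`x ↦ (α/2)‖x − E x‖² + (r/2)‖x − z‖²` satisfies `E x̄ = E z`. -/
theorem vppha_minimizer_mean
    {H : Type*} [NormedAddCommGroup H] [InnerProductSpace ℝ H] [CompleteSpace H]
    (N : Submodule ℝ H) (hN : IsClosed (N : Set H))
    (E : H →L[ℝ] H)
    (hE_idem : ∀ x, E (E x) = E x)
    (hE_sa : ∀ x y, ⟪E x, y⟫ = ⟪x, E y⟫)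
    (hE_range : ∀ x, E x ∈ N)
    (hE_orth : ∀ y ∈ Nᗮ, E y = 0)
    (r α : ℝ) (hr : 0 < r) (hα : 0 ≤ α) (z : H)
    (xbar : H) (hx_mem : xbar ∈ N)
    (hx_min : IsMinOn (fun x : H => (α / 2) * ‖x - E x‖ ^ 2 + (r / 2) * ‖x - z‖ ^ 2)
      (N : Set H) xbar) :
    E xbar = E z :=
  vppha_minimizer_mean_general N E hE_idem hE_sa hE_range r α hr z xbar hx_mem hx_min
end
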